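/- arXiv:math/0612378 — 4 statements merged into one kernel-verified Lean document; each statement's English description precedes it below -/
import Mathlib

section
/- There exists a constant C > 0 such that for every finite sequence of positive real numbers a_1, ..., a_n with a_n ≥ 1, the sum over k from 1 to n of a_k / (s_k · (log(s_k + 1))^2) is at most C, where s_k = a_k + a_{k+1} + ... + a_n. -/
open Finset

private lemma key_ineq (a s' : ℝ) (ha : 0 < a) (hs' : 1 ≤ s') :
    a / ((s' + a) * (Real.log (s' + a + 1)) ^ 2) ≤
      2 / Real.log (s' + 1) - 2 / Real.log (s' + a + 1) := by
  set s := s' + a with hs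
  have hs1 : 1 ≤ s := by rw [hs]; nlinarith
  have hl2 : (0:ℝ) < Real.log 2 := Real.log_pos (by norm_num)
  have hL' : Real.log 2 ≤ Real.log (s' + 1) := Real.log_le_log (by norm_num) (by linarith)
  have hL : Real.log 2 ≤ Real.log (s + 1) := Real.log_le_log (by norm_num) (by linarith)
  have hL'pos : 0 < Real.log (s' + 1) := lt_of_lt_of_le hl2 hL'
  have hLpos : 0 < Real.log (s + 1) := lt_of_lt_of_le hl2 hL
  have hLL : Real.log (s' + 1) ≤ Real.log (s + 1) :=
    Real.log_le_log (by linarith) (by rw [hs]; linarith)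
  have hdiff : a / (s + 1) ≤ Real.log (s + 1) - Real.log (s' + 1) := by
    have h1 : Real.log ((s' + 1) / (s + 1)) ≤ (s' + 1) / (s + 1) - 1 :=
      Real.log_le_sub_one_of_pos (by positivity)
    have h2 : Real.log ((s' + 1) / (s + 1)) = Real.log (s' + 1) - Real.log (s + 1) :=
      Real.log_div (by linarith) (by linarith)
    have h3 : (s' + 1) / (s + 1) - 1 = -(a / (s + 1)) := by
      field_simp; rw [hs]; ring
    rw [h2, h3] at h1; linarith
  have h2s : s + 1 ≤ 2 * s := by linarith
  have step1 : a / (s * (Real.log (s + 1)) ^ 2) ≤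
      2 * a / ((s + 1) * (Real.log (s + 1)) ^ 2) := by
    rw [div_le_div_iff₀ (by positivity) (by positivity)]
    nlinarith [mul_le_mul_of_nonneg_left h2s
      (mul_nonneg ha.le (sq_nonneg (Real.log (s + 1))))]
  have step2 : 2 * a / ((s + 1) * (Real.log (s + 1)) ^ 2) ≤
      2 * a / ((s + 1) * (Real.log (s + 1) * Real.log (s' + 1))) := by
    apply div_le_div_of_nonneg_left (by linarith) (by positivity)
    have hmul : Real.log (s + 1) * Real.log (s' + 1) ≤ (Real.log (s + 1)) ^ 2 := by
      rw [sq]; exact mul_le_mul_of_nonneg_left hLL hLpos.le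
    exact mul_le_mul_of_nonneg_left hmul (by linarith)
  have step3 : 2 * a / ((s + 1) * (Real.log (s + 1) * Real.log (s' + 1))) ≤
      2 / Real.log (s' + 1) - 2 / Real.log (s + 1) := by
    have heq : 2 / Real.log (s' + 1) - 2 / Real.log (s + 1) =
        2 * (Real.log (s + 1) - Real.log (s' + 1)) /
          (Real.log (s + 1) * Real.log (s' + 1)) := by
      field_simp
    rw [heq, div_le_div_iff₀ (by positivity) (by positivity)]
    have h4 := hdiff
    rw [div_le_iff₀ (by positivity)] at h4
    nlinarith [mul_pos hLpos hL'pos]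
  linarith

private lemma shift_sum (n : ℕ) (a : Fin (n + 2) → ℝ) (k : Fin (n + 1)) :
    ∑ j ∈ Finset.Ici k.succ, a j = ∑ j ∈ Finset.Ici k, a j.succ := by
  have hmap : Finset.Ici k.succ = (Finset.Ici k).map ⟨Fin.succ, Fin.succ_injective _⟩ := by
    ext j
    simp only [Finset.mem_map, Finset.mem_Ici, Function.Embedding.coeFn_mk]
    constructor
    · intro hj
      induction j using Fin.cases with
      | zero => exact absurd (Fin.le_zero_iff.mp hj) (Fin.succ_ne_zero k)
      | succ j => exact ⟨j, Fin.succ_le_succ_iff.mp hj, rfl⟩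
    · rintro ⟨j', hj', rfl⟩
      exact Fin.succ_le_succ_iff.mpr hj'
  rw [hmap, Finset.sum_map]
  rfl

private lemma Ici_zero_univ (m : ℕ) : Finset.Ici (0 : Fin (m + 1)) = Finset.univ := by
  ext j; simp [Fin.zero_le]

private lemma main_bound (n : ℕ) (a : Fin (n + 1) → ℝ) (hpos : ∀ i, 0 < a i)
    (hlast : 1 ≤ a (Fin.last n)) :
    ∑ k : Fin (n + 1),
        a k / ((∑ j ∈ Finset.Ici k, a j) *
          (Real.log ((∑ j ∈ Finset.Ici k, a j) + 1)) ^ 2) ≤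
      (1 / (Real.log 2) ^ 2 + 2 / Real.log 2) -
        2 / Real.log ((∑ j ∈ Finset.Ici (0 : Fin (n + 1)), a j) + 1) := by
  induction n with
  | zero =>
    have hlast0 : (Fin.last 0) = (0 : Fin 1) := rfl
    rw [hlast0] at hlast
    have ha0 : 0 < a 0 := hpos 0
    have hIci : (∑ j ∈ Finset.Ici (0 : Fin (0 + 1)), a j) = a 0 := by
      rw [Ici_zero_univ, Fin.sum_univ_succ]
      simp
    have hl2 : (0:ℝ) < Real.log 2 := Real.log_pos (by norm_num)
    have hL : Real.log 2 ≤ Real.log (a 0 + 1) := Real.log_le_log (by norm_num) (by linarith)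
    have hLpos : 0 < Real.log (a 0 + 1) := lt_of_lt_of_le hl2 hL
    have h1 : a 0 / (a 0 * (Real.log (a 0 + 1)) ^ 2) = 1 / (Real.log (a 0 + 1)) ^ 2 := by
      rw [div_eq_div_iff (by positivity) (by positivity)]; ring
    rw [Fin.sum_univ_succ]
    simp only [Finset.univ_eq_empty, Finset.sum_empty, add_zero]
    rw [hIci, h1]
    have h2 : 1 / (Real.log (a 0 + 1)) ^ 2 ≤ 1 / (Real.log 2) ^ 2 := by
      apply div_le_div_of_nonneg_left (by norm_num) (by positivity)
      nlinarith
    have h3 : 2 / Real.log (a 0 + 1) ≤ 2 / Real.log 2 := by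
      exact div_le_div_of_nonneg_left (by norm_num) hl2 hL
    linarith
  | succ n ih =>
    set b : Fin (n + 1) → ℝ := fun i => a i.succ with hb
    have hbpos : ∀ i, 0 < b i := fun i => hpos i.succ
    have hblast : 1 ≤ b (Fin.last n) := by
      rw [hb]; simp only [Fin.succ_last]; exact hlast
    have hshift : ∀ k : Fin (n + 1), ∑ j ∈ Finset.Ici k.succ, a j = ∑ j ∈ Finset.Ici k, b j :=
      fun k => shift_sum n a k
    have htail := ih b hbpos hblast
    -- T = tail sum without a 0
    set T : ℝ := ∑ j ∈ Finset.Ici (0 : Fin (n + 1)), b j with hT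
    have hTuniv : T = ∑ j : Fin (n + 1), b j := by rw [hT, Ici_zero_univ]
    have hT1 : 1 ≤ T := by
      rw [hTuniv]
      calc (1:ℝ) ≤ b (Fin.last n) := hblast
        _ ≤ ∑ j : Fin (n + 1), b j :=
          Finset.single_le_sum (fun i _ => (hbpos i).le) (Finset.mem_univ _)
    have hS0 : (∑ j ∈ Finset.Ici (0 : Fin (n + 2)), a j) = T + a 0 := by
      rw [Ici_zero_univ, Fin.sum_univ_succ, hTuniv]; ring
    rw [Fin.sum_univ_succ]
    have hterm0 : a 0 / ((∑ j ∈ Finset.Ici (0 : Fin (n + 2)), a j) *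
          (Real.log ((∑ j ∈ Finset.Ici (0 : Fin (n + 2)), a j) + 1)) ^ 2) ≤
        2 / Real.log (T + 1) - 2 / Real.log ((∑ j ∈ Finset.Ici (0 : Fin (n + 2)), a j) + 1) := by
      rw [hS0]
      exact key_ineq (a 0) T (hpos 0) hT1
    have hrest : ∑ k : Fin (n + 1),
        a k.succ / ((∑ j ∈ Finset.Ici k.succ, a j) *
          (Real.log ((∑ j ∈ Finset.Ici k.succ, a j) + 1)) ^ 2) ≤
        (1 / (Real.log 2) ^ 2 + 2 / Real.log 2) - 2 / Real.log (T + 1) := by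
      calc ∑ k : Fin (n + 1),
          a k.succ / ((∑ j ∈ Finset.Ici k.succ, a j) *
            (Real.log ((∑ j ∈ Finset.Ici k.succ, a j) + 1)) ^ 2)
          = ∑ k : Fin (n + 1),
            b k / ((∑ j ∈ Finset.Ici k, b j) *
              (Real.log ((∑ j ∈ Finset.Ici k, b j) + 1)) ^ 2) := by
            apply Finset.sum_congr rfl
            intro k _
            rw [hshift k]
        _ ≤ _ := htail
    linarith

theorem tail_sum_log_sq_bounded :
    ∃ C : ℝ, 0 < C ∧
      ∀ (n : ℕ) (a : Fin (n + 1) → ℝ), (∀ i, 0 < a i) → 1 ≤ a (Fin.last n) →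
        ∑ k : Fin (n + 1),
            a k / ((∑ j ∈ Finset.Ici k, a j) *
              (Real.log ((∑ j ∈ Finset.Ici k, a j) + 1)) ^ 2) ≤ C := by
  have hl2 : (0:ℝ) < Real.log 2 := Real.log_pos (by norm_num)
  refine ⟨1 / (Real.log 2) ^ 2 + 2 / Real.log 2, by positivity, ?_⟩
  intro n a hpos hlast
  have h := main_bound n a hpos hlast
  have hS0 : 1 ≤ ∑ j ∈ Finset.Ici (0 : Fin (n + 1)), a j := by
    rw [Ici_zero_univ]
    calc (1:ℝ) ≤ a (Fin.last n) := hlast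
      _ ≤ ∑ j : Fin (n + 1), a j :=
        Finset.single_le_sum (fun i _ => (hpos i).le) (Finset.mem_univ _)
  have hLpos : 0 < Real.log ((∑ j ∈ Finset.Ici (0 : Fin (n + 1)), a j) + 1) :=
    Real.log_pos (by linarith)
  have : 0 ≤ 2 / Real.log ((∑ j ∈ Finset.Ici (0 : Fin (n + 1)), a j) + 1) := by positivity
  linarith
end

section
/- Let ρ : ℝ≥0 → ℝ≥0 be continuous and suppose τ(x) = x/ρ(x) is strictly increasing on [a, ∞) for some a > 0 with τ(x) → ∞ as x → ∞, and suppose τ(x)/log(x) is non-decreasing on [a, ∞). Then there exists θ > 1 such that τ(x) + 1 ≤ τ(θ·x) for every sufficiently large x. -/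
open Filter in
theorem exists_theta_tau_add_one_le (ρ : ℝ → ℝ) (a : ℝ) (ha : 0 < a)
    (hcont : ContinuousOn ρ (Set.Ici a))
    (hpos : ∀ x ≥ a, 0 < ρ x)
    (hτmono : StrictMonoOn (fun x => x / ρ x) (Set.Ici a))
    (hτtop : Tendsto (fun x => x / ρ x) atTop atTop)
    (hquot : MonotoneOn (fun x => (x / ρ x) / Real.log x) (Set.Ici a)) :
    ∃ θ : ℝ, 1 < θ ∧ ∀ᶠ x in atTop, x / ρ x + 1 ≤ (θ * x) / ρ (θ * x) := by
  set b : ℝ := max a 2 with hbdef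
  have hab : a ≤ b := le_max_left _ _
  have hb2 : (2:ℝ) ≤ b := le_max_right _ _
  have hb1 : (1:ℝ) < b := by linarith
  have hρb : 0 < ρ b := hpos b hab
  have hlogb : 0 < Real.log b := Real.log_pos hb1
  have hτb : 0 < b / ρ b := div_pos (by linarith) hρb
  set c : ℝ := (b / ρ b) / Real.log b with hc
  have hcpos : 0 < c := div_pos hτb hlogb
  set θ : ℝ := Real.exp (1 / c) with hθdef
  have hθ1 : 1 < θ := by
    rw [hθdef]
    have : (0:ℝ) < 1 / c := by positivity
    calc (1:ℝ) = Real.exp 0 := by simp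
    _ < Real.exp (1 / c) := Real.exp_lt_exp.mpr this
  refine ⟨θ, hθ1, ?_⟩
  rw [eventually_atTop]
  refine ⟨b, fun x hx => ?_⟩
  have hax : a ≤ x := hab.trans hx
  have hxpos : 0 < x := by linarith
  have hx1 : 1 < x := lt_of_lt_of_le hb1 hx
  have hlogx : 0 < Real.log x := Real.log_pos hx1
  have hθpos : 0 < θ := by linarith
  have hxθ : x ≤ θ * x := by nlinarith
  have haθx : a ≤ θ * x := hax.trans hxθ
  have hlogθx : Real.log (θ * x) = 1 / c + Real.log x := by
    rw [Real.log_mul (ne_of_gt hθpos) (ne_of_gt hxpos), hθdef, Real.log_exp]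
  have hLθx : 0 < Real.log (θ * x) := by
    rw [hlogθx]; positivity
  have hq1 : c ≤ (x / ρ x) / Real.log x := hquot (Set.mem_Ici.mpr hab) (Set.mem_Ici.mpr hax) hx
  have hq2 : (x / ρ x) / Real.log x ≤ ((θ * x) / ρ (θ * x)) / Real.log (θ * x) :=
    hquot (Set.mem_Ici.mpr hax) (Set.mem_Ici.mpr haθx) hxθ
  set t : ℝ := x / ρ x
  set s : ℝ := (θ * x) / ρ (θ * x)
  set L : ℝ := Real.log x
  set L' : ℝ := Real.log (θ * x)
  have hs : s = (s / L') * L' := by field_simp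
  have ht : t = (t / L) * L := by field_simp
  have key : (t / L) * L' ≤ (s / L') * L' := by
    exact mul_le_mul_of_nonneg_right hq2 (le_of_lt hLθx)
  have htL : (t / L) * L = t := div_mul_cancel₀ t (ne_of_gt hlogx)
  have expand : (t / L) * L' = t + (t / L) * (1 / c) := by
    rw [hlogθx, mul_add, htL]; ring
  have last : 1 ≤ (t / L) * (1 / c) := by
    have : c * (1/c) ≤ (t / L) * (1 / c) :=
      mul_le_mul_of_nonneg_right hq1 (by positivity)
    rw [mul_one_div_cancel (ne_of_gt hcpos)] at this
    exact this
  calc t + 1 ≤ t + (t / L) * (1 / c) := by linarith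
  _ = (t / L) * L' := expand.symm
  _ ≤ (s / L') * L' := key
  _ = s := hs.symm
end

section
/- Let V be a finite set with metric d and φ : V → B a 1-Lipschitz map into a normed space satisfying the Poincaré inequality (1/|V|²)·Σ_{x,y∈V} ‖φ(x)−φ(y)‖² ≤ K for some constant K. Suppose there exist κ, κ' > 0 such that the set of pairs (x,y) with d(x,y) ≥ κ·D has cardinality at least κ'·|V|², where D = diam(V,d). If R² · κ² · κ' ≥ K, then there exist two points v₁, v₂ ∈ V with d(v₁,v₂) ≥ κ·D and ‖φ(v₁) − φ(v₂)‖ ≤ (d(v₁,v₂)/D)·R ≤ R. -/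
theorem exists_close_far_pair
    {V : Type*} [Fintype V] [MetricSpace V]
    {B : Type*} [NormedAddCommGroup B]
    (φ : V → B) (hlip : LipschitzWith 1 φ)
    (K κ κ' R D : ℝ) (hK : 0 < K) (hκ : 0 < κ) (hκ' : 0 < κ') (hR : 0 < R)
    (hD : D = Metric.diam (Set.univ : Set V)) (hDpos : 0 < D)
    (hpoincare : (1 / (Fintype.card V : ℝ) ^ 2) *
        ∑ x : V, ∑ y : V, ‖φ x - φ y‖ ^ 2 ≤ K)
    (hpairs : κ' * (Fintype.card V : ℝ) ^ 2 ≤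
        (Finset.univ.filter (fun p : V × V => κ * D ≤ dist p.1 p.2)).card)
    (hRK : K ≤ R ^ 2 * κ ^ 2 * κ') :
    ∃ v₁ v₂ : V, κ * D ≤ dist v₁ v₂ ∧
      ‖φ v₁ - φ v₂‖ ≤ (dist v₁ v₂ / D) * R ∧ (dist v₁ v₂ / D) * R ≤ R := by
  have hne : Nonempty V := by
    by_contra h
    rw [not_nonempty_iff] at h
    rw [Set.univ_eq_empty_iff.mpr h, Metric.diam_empty] at hD
    exact absurd hD hDpos.ne'
  have hn : (0:ℝ) < (Fintype.card V : ℝ) := by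
    exact_mod_cast Fintype.card_pos
  have hdistD : ∀ v₁ v₂ : V, dist v₁ v₂ ≤ D := by
    intro v₁ v₂
    rw [hD]
    exact Metric.dist_le_diam_of_mem (Set.finite_univ.isBounded)
      (Set.mem_univ _) (Set.mem_univ _)
  have hlast : ∀ v₁ v₂ : V, (dist v₁ v₂ / D) * R ≤ R := by
    intro v₁ v₂
    have : dist v₁ v₂ / D ≤ 1 := (div_le_one hDpos).mpr (hdistD v₁ v₂)
    nlinarith
  by_contra hcon
  push_neg at hcon
  -- every far pair has ‖φ v₁ - φ v₂‖ > (d/D)R ≥ κR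
  have hfar : ∀ p : V × V, κ * D ≤ dist p.1 p.2 → κ * R < ‖φ p.1 - φ p.2‖ := by
    intro p hp
    have h1 := hcon p.1 p.2 hp
    rcases lt_or_ge ((dist p.1 p.2 / D) * R) ‖φ p.1 - φ p.2‖ with h | h
    · have hκd : κ ≤ dist p.1 p.2 / D := (le_div_iff₀ hDpos).mpr (by linarith [hp])
      calc κ * R ≤ (dist p.1 p.2 / D) * R := by nlinarith
        _ < _ := h
    · exact absurd (h1 h) (not_lt.mpr (hlast p.1 p.2))
  set s := Finset.univ.filter (fun p : V × V => κ * D ≤ dist p.1 p.2) with hs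
  have hsne : s.Nonempty := by
    rw [← Finset.card_pos]
    have h0 : (0:ℝ) < s.card := lt_of_lt_of_le (by positivity) hpairs
    exact_mod_cast h0
  have hlb : (s.card : ℝ) * (κ * R) ^ 2 <
      ∑ p ∈ s, ‖φ p.1 - φ p.2‖ ^ 2 := by
    calc (s.card : ℝ) * (κ * R) ^ 2 = ∑ _p ∈ s, (κ * R) ^ 2 := by
          rw [Finset.sum_const, nsmul_eq_mul]
      _ < ∑ p ∈ s, ‖φ p.1 - φ p.2‖ ^ 2 := by
          apply Finset.sum_lt_sum_of_nonempty hsne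
          intro p hp
          have := hfar p (Finset.mem_filter.mp hp).2
          have h0 : 0 ≤ κ * R := by positivity
          nlinarith
  have hsub : ∑ p ∈ s, ‖φ p.1 - φ p.2‖ ^ 2 ≤
      ∑ x : V, ∑ y : V, ‖φ x - φ y‖ ^ 2 := by
    have heq : ∑ x : V, ∑ y : V, ‖φ x - φ y‖ ^ 2
        = ∑ p : V × V, ‖φ p.1 - φ p.2‖ ^ 2 :=
      (Fintype.sum_prod_type (f := fun p : V × V => ‖φ p.1 - φ p.2‖ ^ 2)).symm
    rw [heq]
    exact Finset.sum_le_sum_of_subset_of_nonneg (Finset.filter_subset _ _)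
      (fun p _ _ => by positivity)
  have hK2 : K * (Fintype.card V : ℝ) ^ 2 ≤ κ' * (Fintype.card V : ℝ) ^ 2 * (κ * R) ^ 2 := by
    nlinarith
  have hcard : κ' * (Fintype.card V : ℝ) ^ 2 * (κ * R) ^ 2 ≤ (s.card : ℝ) * (κ * R) ^ 2 := by
    nlinarith
  have hpo : ∑ x : V, ∑ y : V, ‖φ x - φ y‖ ^ 2 ≤ K * (Fintype.card V : ℝ) ^ 2 := by
    have hn2 : (0:ℝ) < (Fintype.card V : ℝ) ^ 2 := by positivity
    rw [div_mul_eq_mul_div, one_mul, div_le_iff₀ hn2] at hpoincare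
    linarith
  linarith
end

section
/- In the free product H = ℤ/2ℤ * ℤ with generators σ and t, the subgroup generated by {t^k σ t^{−k} : k ∈ ℤ} is normal, is a free product of countably many copies of ℤ/2ℤ (i.e., the elements t^k σ t^{−k} satisfy no relations except that each has order 2), and H is the semidirect product of this subgroup with the infinite cyclic subgroup generated by t. -/
/-- The free product `ℤ/2ℤ * ℤ`. -/
abbrev HH : Type := Monoid.Coprod (Multiplicative (ZMod 2)) (Multiplicative ℤ)

/-- The involution generating the `ℤ/2ℤ` free factor. -/
def sigmaGen : HH := Monoid.Coprod.inl (Multiplicative.ofAdd (1 : ZMod 2))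

/-- The generator of the `ℤ` free factor. -/
def tGen : HH := Monoid.Coprod.inr (Multiplicative.ofAdd (1 : ℤ))

/-- The conjugate `σ^(k) = t^k σ t^{-k}`. -/
def sigmaConj (k : ℤ) : HH := tGen ^ k * sigmaGen * tGen ^ (-k)

/-!
Conjugation by `t` shifts the `σ^(k)`, so their closure `N` is normal, and `N` together with `t`
generates `H`. Since `N` lies in the kernel of the projection `H → ℤ` killing `σ`, this gives
`H = N ⋊ ⟨t⟩`. For freeness, let `H` act on reduced words in the alphabet `ℤ`: `σ` toggles a
leading letter `0` and `t` adds `1` to every letter, so `σ^(k)` toggles a leading `k`. A reduced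
word `k₁ ⋯ kₙ` is then the image of the empty word under `σ^(k₁) ⋯ σ^(kₙ)`, which is hence not `1`.
-/

open Function Equiv Subgroup Pointwise

/-- Reduced words: the normal forms of the free product of copies of `ℤ/2ℤ` indexed by `α`. -/
abbrev ReducedWord (α : Type*) : Type _ := {l : List α // l.IsChain (· ≠ ·)}

namespace ReducedWord

variable {α β : Type*}

def mapPerm : Perm α →* Perm (ReducedWord α) where
  toFun e := (listEquivOfEquiv e).subtypeEquiv fun l => by
    simp [listEquivOfEquiv, List.isChain_map]
  map_one' := by ext; simp [listEquivOfEquiv]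
  map_mul' e f := by ext; simp [listEquivOfEquiv]

variable [DecidableEq α] [DecidableEq β]

/-- Left multiplication by the generator `a` on normal forms. -/
def toggleHead (a : α) : List α → List α
  | [] => [a]
  | b :: l => if b = a then l else a :: b :: l

theorem isChain_toggleHead (a : α) {l : List α} (hl : l.IsChain (· ≠ ·)) :
    (toggleHead a l).IsChain (· ≠ ·) := by
  cases l with
  | nil => exact List.isChain_singleton a
  | cons b l =>
    by_cases hb : b = a
    · simpa [toggleHead, hb] using hl.tail
    · simpa [toggleHead, hb] using List.isChain_cons_cons.2 ⟨Ne.symm hb, hl⟩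

theorem toggleHead_toggleHead (a : α) {l : List α} (hl : l.IsChain (· ≠ ·)) :
    toggleHead a (toggleHead a l) = l := by
  cases l with
  | nil => simp [toggleHead]
  | cons b l =>
    by_cases hb : b = a
    · subst hb
      cases l with
      | nil => simp [toggleHead]
      | cons c l => simp [toggleHead, Ne.symm (List.isChain_cons_cons.1 hl).1]
    · simp [toggleHead, hb]

theorem toggleHead_of_forall_head?_ne {a : α} {l : List α} (h : ∀ b ∈ l.head?, b ≠ a) :
    toggleHead a l = a :: l := by
  cases l with
  | nil => rfl
  | cons b l => simp [toggleHead, h b rfl]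

theorem map_toggleHead (e : α ≃ β) (a : α) (l : List α) :
    (toggleHead a l).map e = toggleHead (e a) (l.map e) := by
  cases l with
  | nil => rfl
  | cons b l => by_cases hb : b = a <;> simp [toggleHead, hb]

def toggle (a : α) : Perm (ReducedWord α) :=
  Involutive.toPerm (fun w => ⟨toggleHead a w.1, isChain_toggleHead a w.2⟩)
    fun w => Subtype.ext (toggleHead_toggleHead a w.2)

theorem toggle_mul_self (a : α) : toggle a * toggle a = 1 :=
  Perm.ext fun w => Subtype.ext (toggleHead_toggleHead a w.2)

theorem mapPerm_mul_toggle_mul_inv (e : Perm α) (a : α) :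
    mapPerm e * toggle a * (mapPerm e)⁻¹ = toggle (e a) := by
  rw [mul_inv_eq_iff_eq_mul]
  ext1 w
  exact Subtype.ext (map_toggleHead e a w.1)

theorem prod_map_toggle_apply_nil {L : List α} (hL : L.IsChain (· ≠ ·)) :
    (L.map toggle).prod ⟨[], List.isChain_nil⟩ = ⟨L, hL⟩ := by
  induction L with
  | nil => rfl
  | cons a L ih =>
    obtain ⟨hhead, hL'⟩ := List.isChain_cons.1 hL
    rw [List.map_cons, List.prod_cons, Perm.mul_apply, ih hL']
    exact Subtype.ext (toggleHead_of_forall_head?_ne fun b hb => (hhead b hb).symm)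

theorem prod_map_ne_one {G : Type*} [Group G] (ρ : G →* Perm (ReducedWord α)) (s : α → G)
    (hs : ∀ a, ρ (s a) = toggle a) {L : List α} (hL : L.IsChain (· ≠ ·)) (hne : L ≠ []) :
    (L.map s).prod ≠ 1 := by
  intro h
  have hρ : ρ (L.map s).prod = (L.map toggle).prod := by
    rw [map_list_prod, List.map_map, comp_def]
    simp only [hs]
  have hL' := prod_map_toggle_apply_nil hL
  rw [← hρ, h, map_one, Perm.one_apply] at hL'
  exact hne (congrArg Subtype.val hL').symm

end ReducedWord

def zmodTwoHom {G : Type*} [Group G] (g : G) (hg : g ^ 2 = 1) : Multiplicative (ZMod 2) →* G :=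
  AddMonoidHom.toMultiplicativeLeft <| ZMod.lift 2 ⟨zmultiplesHom _ (Additive.ofMul g), by
    simp [← ofMul_zpow, hg]⟩

@[simp]
theorem zmodTwoHom_ofAdd_one {G : Type*} [Group G] (g : G) (hg : g ^ 2 = 1) :
    zmodTwoHom g hg (Multiplicative.ofAdd 1) = g := by
  show Additive.toMul (ZMod.lift 2 _ ((1 : ℤ) : ZMod 2)) = g
  rw [ZMod.lift_coe]
  simp

theorem existsUnique_mul_zpow_of_sup_eq_top {G : Type*} [Group G] {N : Subgroup G} [N.Normal]
    {g : G} (hsup : N ⊔ zpowers g = ⊤) (f : G →* Multiplicative ℤ) (hN : N ≤ f.ker)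
    (hg : f g = Multiplicative.ofAdd 1) (x : G) :
    ∃! p : N × ℤ, x = p.1 * g ^ p.2 := by
  have hx : x ∈ (N : Set G) * (zpowers g : Set G) := by
    rw [← normal_mul, hsup]
    trivial
  obtain ⟨n, hn, _, ⟨m, rfl⟩, rfl⟩ := hx
  refine ⟨(⟨n, hn⟩, m), rfl, ?_⟩
  rintro ⟨⟨n', hn'⟩, m'⟩ h
  have hf (n : G) (hn : n ∈ N) (m : ℤ) : f (n * g ^ m) = Multiplicative.ofAdd m := by
    rw [map_mul, hN hn, one_mul, map_zpow, hg, ← ofAdd_zsmul, smul_eq_mul, mul_one]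
  have hm : m = m' := by simpa [hf n hn, hf n' hn'] using congrArg f h
  subst hm
  simpa using (mul_right_cancel h).symm

theorem tGen_zpow (k : ℤ) : tGen ^ k = Monoid.Coprod.inr (Multiplicative.ofAdd k) := by
  rw [tGen, ← map_zpow, ← ofAdd_zsmul, smul_eq_mul, mul_one]

theorem sigmaConj_eq_conj (k : ℤ) : sigmaConj k = MulAut.conj (tGen ^ k) sigmaGen := by
  rw [sigmaConj, zpow_neg, MulAut.conj_apply]

theorem sigmaGen_sq : sigmaGen ^ 2 = 1 := by
  rw [sigmaGen, ← map_pow]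
  exact map_one _

theorem sigmaConj_sq (k : ℤ) : sigmaConj k ^ 2 = 1 := by
  rw [sigmaConj_eq_conj, ← map_pow, sigmaGen_sq, map_one]

def reducedWordRep : HH →* Perm (ReducedWord ℤ) :=
  Monoid.Coprod.lift (zmodTwoHom (ReducedWord.toggle 0) (by rw [sq, ReducedWord.toggle_mul_self]))
    (ReducedWord.mapPerm.comp (MulAction.toPermHom (Multiplicative ℤ) ℤ))

theorem reducedWordRep_sigmaConj (k : ℤ) :
    reducedWordRep (sigmaConj k) = ReducedWord.toggle k := by
  rw [sigmaConj_eq_conj, MulAut.conj_apply, tGen_zpow, map_mul, map_mul, map_inv]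
  simp [reducedWordRep, sigmaGen, ReducedWord.mapPerm_mul_toggle_mul_inv]

theorem prod_map_sigmaConj_ne_one {L : List ℤ} (hL : L.IsChain (· ≠ ·)) (hne : L ≠ []) :
    (L.map sigmaConj).prod ≠ 1 :=
  ReducedWord.prod_map_ne_one reducedWordRep sigmaConj reducedWordRep_sigmaConj hL hne

theorem closure_range_sigmaConj_le_ker_snd :
    closure (Set.range sigmaConj) ≤ (Monoid.Coprod.snd : HH →* _).ker := by
  rw [closure_le]
  rintro _ ⟨k, rfl⟩
  rw [SetLike.mem_coe, MonoidHom.mem_ker, sigmaConj_eq_conj, MulAut.conj_apply]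
  simp [sigmaGen]

theorem tGen_zpow_mem_normalizer (j : ℤ) :
    tGen ^ j ∈ normalizer (closure (Set.range sigmaConj) : Set HH) := by
  refine normalizer_le_normalizer_closure _ (mem_normalizer_iff_conj_image_eq.2 ?_)
  have : MulAut.conj (tGen ^ j) ∘ sigmaConj = sigmaConj ∘ (j + ·) := by
    ext k
    simp [sigmaConj_eq_conj, zpow_add]
  rw [← Set.range_comp, this, (add_left_surjective j).range_comp]

theorem range_inl_subset_closure_range_sigmaConj :
    Set.range (Monoid.Coprod.inl : _ →* HH) ⊆ closure (Set.range sigmaConj) := by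
  rintro _ ⟨m, rfl⟩
  obtain rfl | rfl : m = 1 ∨ m = Multiplicative.ofAdd 1 := by revert m; decide
  · rw [map_one]
    exact Subgroup.one_mem _
  · exact subset_closure ⟨0, by simp [sigmaConj, sigmaGen]⟩

theorem closure_range_sigmaConj_normal : (closure (Set.range sigmaConj)).Normal := by
  rw [← normalizer_eq_top_iff, eq_top_iff, ← Monoid.Coprod.closure_range_inl_union_inr,
    closure_le, Set.union_subset_iff]
  refine ⟨fun _ hx => le_normalizer (range_inl_subset_closure_range_sigmaConj hx), ?_⟩
  rintro _ ⟨m, rfl⟩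
  simpa [tGen_zpow] using tGen_zpow_mem_normalizer m.toAdd

theorem closure_range_sigmaConj_sup_zpowers :
    closure (Set.range sigmaConj) ⊔ zpowers tGen = ⊤ := by
  rw [eq_top_iff, ← Monoid.Coprod.closure_range_inl_union_inr, closure_le, Set.union_subset_iff]
  refine ⟨fun _ hx => mem_sup_left (range_inl_subset_closure_range_sigmaConj hx), ?_⟩
  rintro _ ⟨m, rfl⟩
  exact mem_sup_right ⟨m.toAdd, by simp [tGen_zpow]⟩

theorem normal_closure_of_involution_structure :
    (Subgroup.closure (Set.range sigmaConj)).Normal ∧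
    -- each `σ^(k)` is an involution
    (∀ k : ℤ, sigmaConj k ≠ 1 ∧ sigmaConj k ^ 2 = 1) ∧
    -- the `σ^(k)` satisfy no other relations: every nonempty alternating
    -- word in distinct consecutive `σ^(k)`'s is nontrivial, so the subgroup
    -- is a free product of countably many copies of `ℤ/2ℤ`
    (∀ (n : ℕ), 0 < n → ∀ k : Fin n → ℤ,
      (∀ (i : Fin n) (h : (i : ℕ) + 1 < n), k i ≠ k ⟨(i : ℕ) + 1, h⟩) →
      ((List.finRange n).map (fun i => sigmaConj (k i))).prod ≠ 1) ∧
    -- `H` is the semidirect product of this subgroup with `⟨t⟩`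
    (∀ h : HH, ∃! p : Subgroup.closure (Set.range sigmaConj) × ℤ,
      h = (p.1 : HH) * tGen ^ p.2) := by
  have hnormal := closure_range_sigmaConj_normal
  refine ⟨hnormal, fun k => ⟨?_, sigmaConj_sq k⟩, fun n hn k hk => ?_,
    existsUnique_mul_zpow_of_sup_eq_top closure_range_sigmaConj_sup_zpowers Monoid.Coprod.snd
      closure_range_sigmaConj_le_ker_snd rfl⟩
  · simpa using prod_map_sigmaConj_ne_one (List.isChain_singleton k) (List.cons_ne_nil k [])
  · have hchain : (List.ofFn k).IsChain (· ≠ ·) := List.isChain_ofFn.2 fun i hi => hk ⟨i, _⟩ hi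
    have hne : List.ofFn k ≠ [] := by simpa [List.ofFn_eq_nil_iff] using hn.ne'
    simpa [List.ofFn_eq_map, List.map_map, comp_def] using prod_map_sigmaConj_ne_one hchain hne
end
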